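/- Let R be a commutative ring and C a poset that is weakly bounded from above and mub-complete. An RC-module M has a finite support of a presentation (FSP) if and only if M is S-determined for some finite subset S ⊆ C. -/

import Mathlib

/-!
An `S`-presentation computes `M(c)` as a colimit indexed by `S ∩ ↓c`, so it depends only on
`S ∩ ↓c`: `S`-presented modules are `S`-determined. Conversely, let `M` be `S`-determined with
`S` finite; it is presented by the finite set of minimal upper bounds of minimal upper bounds of
subsets of `S`. For `c` above `S`, a minimal upper bound `m ≤ c` of `S ∩ ↓c` has the same
`S`-part as `c`, so `M(m) ≅ M(c)`. Every index `j ≤ c` lies above a minimal upper bound `d` of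
`S ∩ ↓j`, with `M(d) ≅ M(j)`, and a minimal upper bound `v ≤ c` of `{d, m}` is again an index,
with `M(m) ≅ M(v)`. Hence every leg of the colimit cocone factors through `M(c) ≅ M(m)`.
-/

open CategoryTheory Limits

namespace Persist

variable (R : Type) [CommRing R] (C : Type) [PartialOrder C]

/-- The natural map `colim_{d ∈ S, d < c} M(d) → M(c)`. -/
noncomputable def lambdaMap (M : C ⥤ ModuleCat.{0} R) (S : Set C) (c : C) :
    colimit (ObjectProperty.ι (fun d : C => d ∈ S ∧ d < c) ⋙ M) ⟶ M.obj c :=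
  colimit.desc (ObjectProperty.ι (fun d : C => d ∈ S ∧ d < c) ⋙ M)
    { pt := M.obj c
      ι :=
        { app := fun d => M.map (homOfLE d.property.2.le)
          naturality := fun d d' f => by
            dsimp
            rw [Category.comp_id, ← M.map_comp]
            exact congrArg M.map (Subsingleton.elim _ _) } }

/-- The natural map `colim_{d ∈ S, d ≤ c} M(d) → M(c)`, i.e. the component at `c` of the
counit `ind_S res_S M ⟶ M`. -/
noncomputable def muMap (M : C ⥤ ModuleCat.{0} R) (S : Set C) (c : C) :
    colimit (ObjectProperty.ι (fun d : C => d ∈ S ∧ d ≤ c) ⋙ M) ⟶ M.obj c :=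
  colimit.desc (ObjectProperty.ι (fun d : C => d ∈ S ∧ d ≤ c) ⋙ M)
    { pt := M.obj c
      ι :=
        { app := fun d => M.map (homOfLE d.property.2)
          naturality := fun d d' f => by
            dsimp
            rw [Category.comp_id, ← M.map_comp]
            exact congrArg M.map (Subsingleton.elim _ _) } }

/-- `M` is `S`-generated: the counit `ind_S res_S M ⟶ M` is an epimorphism
(pointwise criterion). -/
def SGenerated (M : C ⥤ ModuleCat.{0} R) (S : Set C) : Prop :=
  ∀ c : C, Epi (muMap R C M S c)

/-- `M` is `S`-presented: the counit `ind_S res_S M ⟶ M` is an isomorphism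
(pointwise criterion). -/
def SPresented (M : C ⥤ ModuleCat.{0} R) (S : Set C) : Prop :=
  ∀ c : C, IsIso (muMap R C M S c)

/-- The set of births of `M` relative to `S`. -/
def births (M : C ⥤ ModuleCat.{0} R) (S : Set C) : Set C :=
  {c : C | ¬ Epi (lambdaMap R C M S c)}

/-- The set of deaths of `M` relative to `S`. -/
def deaths (M : C ⥤ ModuleCat.{0} R) (S : Set C) : Set C :=
  {c : C | ¬ Mono (lambdaMap R C M S c)}

/-- The `S`-splitting of `M` at `c`: the cokernel of `λ_{M,c}`. -/
noncomputable def splitObj (M : C ⥤ ModuleCat.{0} R) (S : Set C) (c : C) : ModuleCat.{0} R :=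
  cokernel (lambdaMap R C M S c)

/-- Functoriality of the `S`-splitting at `c`. -/
noncomputable def splitMap {L M : C ⥤ ModuleCat.{0} R} (f : L ⟶ M) (S : Set C) (c : C) :
    splitObj R C L S c ⟶ splitObj R C M S c :=
  cokernel.map (lambdaMap R C L S c) (lambdaMap R C M S c)
    (colimMap (Functor.whiskerLeft (ObjectProperty.ι (fun d : C => d ∈ S ∧ d < c)) f))
    (f.app c)
    (by
      apply colimit.hom_ext
      intro d
      simp [lambdaMap, f.naturality])

/-- The support of `M`. -/
def supp (M : C ⥤ ModuleCat.{0} R) : Set C :=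
  {c : C | ¬ IsZero (M.obj c)}

/-- A subset of a poset is Artinian if `<` is well-founded on it (no infinite strictly
descending chains). -/
def ArtinianSubset (S : Set C) : Prop :=
  S.WellFoundedOn (· < ·)

/-- The set of minimal upper bounds of `T`. -/
def mubSet (T : Set C) : Set C :=
  {c : C | c ∈ upperBounds T ∧ ∀ d ∈ upperBounds T, d ≤ c → d = c}

/-- The poset `C` is weakly bounded from above if every finite subset has only finitely many
minimal upper bounds. -/
def WeaklyBoundedAbove : Prop :=
  ∀ T : Set C, T.Finite → (mubSet C T).Finite

/-- The poset `C` is mub-complete if for every finite non-empty subset `T` and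
every upper bound `c` of `T` there is a minimal upper bound `s` of `T` with `s ≤ c`. -/
def MubComplete : Prop :=
  ∀ T : Set C, T.Finite → T.Nonempty → ∀ c ∈ upperBounds T, ∃ s ∈ mubSet C T, s ≤ c

/-- The hat operation: the set of minimal upper bounds of non-empty subsets of `S`. -/
def hatSet (S : Set C) : Set C :=
  {c : C | ∃ T : Set C, T ⊆ S ∧ T.Nonempty ∧ c ∈ mubSet C T}

/-- `M` is `S`-determined: `supp M ⊆ ↑S` and whenever `c ≤ d` with
`S ∩ ↓c = S ∩ ↓d`, the map `M(c ≤ d)` is an isomorphism. -/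
def SDetermined (M : C ⥤ ModuleCat.{0} R) (S : Set C) : Prop :=
  supp R C M ⊆ {c : C | ∃ s ∈ S, s ≤ c} ∧
    ∀ (c d : C) (h : c ≤ d), S ∩ Set.Iic c = S ∩ Set.Iic d → IsIso (M.map (homOfLE h))

section Order

variable {C}

lemma subset_hatSet (S : Set C) : S ⊆ hatSet C S := fun s hs =>
  ⟨{s}, Set.singleton_subset_iff.2 hs, Set.singleton_nonempty s,
    fun _ hx => le_of_eq hx, fun _ hd hds => le_antisymm hds (hd rfl)⟩

lemma exists_le_of_mem_hatSet {S : Set C} {e : C} (he : e ∈ hatSet C S) : ∃ s ∈ S, s ≤ e :=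
  let ⟨_, hTS, ⟨t, ht⟩, hmub⟩ := he
  ⟨t, hTS ht, hmub.1 ht⟩

lemma exists_le_of_mem_hatSet_hatSet {S : Set C} {e : C} (he : e ∈ hatSet C (hatSet C S)) :
    ∃ s ∈ S, s ≤ e :=
  let ⟨_, hs', hs'e⟩ := exists_le_of_mem_hatSet he
  let ⟨s, hs, hss'⟩ := exists_le_of_mem_hatSet hs'
  ⟨s, hs, hss'.trans hs'e⟩

lemma finite_hatSet (hwba : WeaklyBoundedAbove C) {S : Set C} (hS : S.Finite) :
    (hatSet C S).Finite :=
  (hS.finite_subsets.biUnion fun T hT => hwba T (hS.subset hT)).subset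
    fun _ ⟨_, hTS, _, hc⟩ => Set.mem_biUnion hTS hc

lemma exists_mem_hatSet_le_inter_Iic_eq (hmub : MubComplete C) {S : Set C} (hS : S.Finite)
    {c : C} (hne : (S ∩ Set.Iic c).Nonempty) :
    ∃ m ∈ hatSet C S, m ≤ c ∧ S ∩ Set.Iic m = S ∩ Set.Iic c := by
  obtain ⟨m, hm, hmc⟩ := hmub _ (hS.inter_of_left _) hne c fun _ ht => ht.2
  refine ⟨m, ⟨_, Set.inter_subset_left, hne, hm⟩, hmc, ?_⟩
  exact (Set.inter_subset_inter_right _ (Set.Iic_subset_Iic.2 hmc)).antisymm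
    fun t ht => ⟨ht.1, hm.1 ht⟩

end Order

abbrev interIic (S : Set C) (c : C) : ObjectProperty C := fun d => d ∈ S ∧ d ≤ c

section Colimits

variable {R C} (M : C ⥤ ModuleCat.{0} R)

abbrev diagramIic (S : Set C) (c : C) : (interIic C S c).FullSubcategory ⥤ ModuleCat.{0} R :=
  ObjectProperty.ι (interIic C S c) ⋙ M

lemma ι_muMap (S : Set C) (c : C) (j : (interIic C S c).FullSubcategory) :
    colimit.ι (diagramIic M S c) j ≫ muMap R C M S c =
      M.map (homOfLE j.property.2) :=
  colimit.ι_desc _ _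

lemma isZero_colimit_of_forall_not (P : ObjectProperty C) (hP : ∀ e, ¬ P e) :
    IsZero (colimit (P.ι ⋙ M)) := by
  rw [IsZero.iff_id_eq_zero]
  exact colimit.hom_ext fun j => absurd j.property (hP j.obj)

lemma muMap_comp_map {S : Set C} {c d : C} (h : c ≤ d) :
    muMap R C M S c ≫ M.map (homOfLE h) =
      colimit.pre (diagramIic M S d)
        (ObjectProperty.ιOfLE fun _ he => ⟨he.1, he.2.trans h⟩) ≫ muMap R C M S d := by
  refine colimit.hom_ext fun j => ?_
  have hpre := colimit.ι_pre_assoc (diagramIic M S d)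
    (ObjectProperty.ιOfLE fun _ he => ⟨he.1, he.2.trans h⟩) j (muMap R C M S d)
  rw [reassoc_of% ι_muMap, ← M.map_comp]
  exact (hpre.trans (ι_muMap M S d _)).symm

end Colimits

section Presented

variable {R C} {M : C ⥤ ModuleCat.{0} R} {S : Set C}

lemma SPresented.supp_subset (hM : SPresented R C M S) :
    supp R C M ⊆ {c : C | ∃ s ∈ S, s ≤ c} := by
  intro c hc
  by_contra hcS
  have := hM c
  exact hc ((isZero_colimit_of_forall_not M (interIic C S c) fun e he => hcS ⟨e, he⟩).of_iso
    (asIso (muMap R C M S c)).symm)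

lemma SPresented.isIso_map (hM : SPresented R C M S) {c d : C} (h : c ≤ d)
    (hcd : S ∩ Set.Iic c = S ∩ Set.Iic d) : IsIso (M.map (homOfLE h)) := by
  have hle : interIic C S c ≤ interIic C S d := fun _ he => ⟨he.1, he.2.trans h⟩
  have := (ObjectProperty.isEquivalence_ιOfLE_iff hle).2 fun e he =>
    ObjectProperty.le_isoClosure _ _ (show e ∈ S ∩ Set.Iic c from hcd ▸ he)
  have := hM c
  have := hM d
  have : IsIso (muMap R C M S c ≫ M.map (homOfLE h)) := by
    rw [muMap_comp_map]
    infer_instance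
  exact IsIso.of_isIso_comp_left (muMap R C M S c) _

lemma SPresented.sDetermined (hM : SPresented R C M S) : SDetermined R C M S :=
  ⟨hM.supp_subset, fun _ _ h hcd => hM.isIso_map h hcd⟩

end Presented

section Presentation

variable {R C} {M : C ⥤ ModuleCat.{0} R} {S : Set C} {c : C}
  (ν : M.obj c ⟶ colimit (diagramIic M S c))

lemma isIso_muMap_of_ι_eq (hν : ν ≫ muMap R C M S c = 𝟙 _)
    (h : ∀ j, colimit.ι (diagramIic M S c) j = M.map (homOfLE j.property.2) ≫ ν) :
    IsIso (muMap R C M S c) :=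
  ⟨ν, colimit.hom_ext fun j => by rw [reassoc_of% ι_muMap, h j, Category.comp_id], hν⟩

lemma ι_eq_of_le {j k : (interIic C S c).FullSubcategory} (hjk : j.obj ≤ k.obj)
    (hk : colimit.ι (diagramIic M S c) k = M.map (homOfLE k.property.2) ≫ ν) :
    colimit.ι (diagramIic M S c) j = M.map (homOfLE j.property.2) ≫ ν := by
  rw [← colimit.w _ (ObjectProperty.homMk (homOfLE hjk)), hk]
  exact (M.map_comp_assoc _ _ _).symm

lemma ι_eq_of_le_of_isIso {j k : (interIic C S c).FullSubcategory} (hjk : j.obj ≤ k.obj)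
    [IsIso (M.map (homOfLE hjk))]
    (hj : colimit.ι (diagramIic M S c) j = M.map (homOfLE j.property.2) ≫ ν) :
    colimit.ι (diagramIic M S c) k = M.map (homOfLE k.property.2) ≫ ν := by
  rw [← cancel_epi (M.map (homOfLE hjk)), ← M.map_comp_assoc]
  exact (colimit.w _ (ObjectProperty.homMk (homOfLE hjk))).trans hj

end Presentation

section Determined

variable {R C} {M : C ⥤ ModuleCat.{0} R} {S : Set C}

lemma SDetermined.isZero_obj (hM : SDetermined R C M S) {c : C} (hc : ¬ ∃ s ∈ S, s ≤ c) :
    IsZero (M.obj c) :=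
  not_not.1 fun h => hc (hM.1 h)

lemma SDetermined.ι_eq (hmub : MubComplete C) (hS : S.Finite) (hM : SDetermined R C M S)
    {c m : C} (hm : m ∈ hatSet C S) (hmc : m ≤ c) (hmeq : S ∩ Set.Iic m = S ∩ Set.Iic c)
    (ν : M.obj c ⟶ colimit (diagramIic M (hatSet C (hatSet C S)) c))
    (hν : colimit.ι (diagramIic M _ c) ⟨m, subset_hatSet _ hm, hmc⟩ = M.map (homOfLE hmc) ≫ ν)
    (j : (interIic C (hatSet C (hatSet C S)) c).FullSubcategory) :
    colimit.ι (diagramIic M _ c) j = M.map (homOfLE j.property.2) ≫ ν := by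
  obtain ⟨d, hd, hdj, hdeq⟩ :=
    exists_mem_hatSet_le_inter_Iic_eq hmub hS (exists_le_of_mem_hatSet_hatSet j.property.1)
  have hdc : d ≤ c := hdj.trans j.property.2
  obtain ⟨v, hv, hvc⟩ := hmub {d, m} (Set.toFinite _) (Set.insert_nonempty _ _) c
    (by rintro x (rfl | rfl) <;> assumption)
  have hdv : d ≤ v := hv.1 (Set.mem_insert _ _)
  have hmv : m ≤ v := hv.1 (Set.mem_insert_of_mem _ rfl)
  have hvS : v ∈ hatSet C (hatSet C S) :=
    ⟨{d, m}, Set.insert_subset hd (Set.singleton_subset_iff.2 hm), Set.insert_nonempty _ _, hv⟩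
  have hmveq : S ∩ Set.Iic m = S ∩ Set.Iic v :=
    (Set.inter_subset_inter_right _ (Set.Iic_subset_Iic.2 hmv)).antisymm
      (hmeq ▸ Set.inter_subset_inter_right _ (Set.Iic_subset_Iic.2 hvc))
  have : IsIso (M.map (homOfLE hmv)) := hM.2 m v hmv hmveq
  have : IsIso (M.map (homOfLE hdj)) := hM.2 d j.obj hdj hdeq
  -- Propagate the factorisation along `m ≤ v ≥ d ≤ j`: it passes down any `≤`, and up
  -- `m ≤ v` and `d ≤ j` because these do not change the `S`-part, so `M` inverts them.
  have hιv := ι_eq_of_le_of_isIso ν (k := ⟨v, hvS, hvc⟩) hmv hν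
  have hιd := ι_eq_of_le ν (j := ⟨d, subset_hatSet _ hd, hdc⟩) hdv hιv
  exact ι_eq_of_le_of_isIso ν hdj hιd

lemma SDetermined.sPresented_hatSet_hatSet (hmub : MubComplete C) (hS : S.Finite)
    (hM : SDetermined R C M S) : SPresented R C M (hatSet C (hatSet C S)) := by
  intro c
  by_cases hne : ∃ s ∈ S, s ≤ c
  · obtain ⟨m, hm, hmc, hmeq⟩ := exists_mem_hatSet_le_inter_Iic_eq hmub hS hne
    have : IsIso (M.map (homOfLE hmc)) := hM.2 m c hmc hmeq
    let ν := inv (M.map (homOfLE hmc)) ≫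
      colimit.ι (diagramIic M _ c) ⟨m, subset_hatSet _ hm, hmc⟩
    refine isIso_muMap_of_ι_eq ν (by rw [Category.assoc, ι_muMap, IsIso.inv_hom_id]) ?_
    exact hM.ι_eq hmub hS hm hmc hmeq ν (by rw [IsIso.hom_inv_id_assoc])
  · refine IsZero.isIso (isZero_colimit_of_forall_not M _ fun e ⟨he, hec⟩ => hne ?_)
      (hM.isZero_obj hne) _
    obtain ⟨s, hs, hse⟩ := exists_le_of_mem_hatSet_hatSet he
    exact ⟨s, hs, hse.trans hec⟩

end Determined

/-- If `C` is weakly bounded from above and mub-complete, then an `RC`-module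
has a finite support of a presentation (FSP) iff it is `S`-determined for some finite `S`. -/
theorem statement18 (hwba : WeaklyBoundedAbove C) (hmub : MubComplete C)
    (M : C ⥤ ModuleCat.{0} R) :
    (∃ S : Set C, S.Finite ∧ SPresented R C M S) ↔
      (∃ S : Set C, S.Finite ∧ SDetermined R C M S) :=
  ⟨fun ⟨S, hS, hM⟩ => ⟨S, hS, hM.sDetermined⟩, fun ⟨S, hS, hM⟩ =>
    ⟨hatSet C (hatSet C S), finite_hatSet hwba (finite_hatSet hwba hS),
      hM.sPresented_hatSet_hatSet hmub hS⟩⟩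

end Persist
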